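/- For graphs G1, G2, x(G1 □ G2) = max{x(G1), x(G2)}, where □ is the Cartesian product. -/

import Mathlib

attribute [local instance] Classical.propDecidable

/-- A cut in a graph: the set of edges leaving some vertex set `W`. -/
def IsCut {V : Type*} (G : SimpleGraph V) (X : Set (Sym2 V)) : Prop :=
  ∃ W : Set V, X = {e | e ∈ G.edgeSet ∧ ∃ a b, e = s(a, b) ∧ a ∈ W ∧ b ∉ W}

/-- An `n/k`-cover: `n` cuts covering every edge at least `k` times. -/
def HasCover {V : Type*} (G : SimpleGraph V) (n k : ℕ) : Prop :=
  ∃ X : Fin n → Set (Sym2 V), (∀ i, IsCut G (X i)) ∧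
    ∀ e ∈ G.edgeSet, k ≤ (Finset.univ.filter fun i => e ∈ X i).card

/-- The fractional cut-covering number `x(G)`. -/
noncomputable def cutCover {V : Type*} (G : SimpleGraph V) : ℝ :=
  sInf { q : ℝ | ∃ n k : ℕ, 0 < k ∧ q = n / k ∧ HasCover G n k }

/-!
A cut is the same as a vertex set `W`, an edge `ab` lying in the cut of `W` iff exactly one of
`a, b` is in `W`. Pulling the sets of a cover of `G₁ □ G₂` back to a fibre `V₁ × {b}` gives a cover
of `G₁` with the same parameters, so `x(G₁) ≤ x(G₁ □ G₂)`. Conversely, an `n₁/k₁`-cover by sets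
`W₁ i` of `G₁` and an `n₂/k₂`-cover by sets `W₂ j` of `G₂` yield the `n₁ n₂` sets
`{(x, y) | Xor (x ∈ W₁ i) (y ∈ W₂ j)}`. An edge of `G₁ □ G₂` moving in the first coordinate lies in
the cut of such a set iff its projection lies in the cut of `W₁ i`, so it is covered at least
`k₁ n₂` times; likewise edges moving in the second coordinate are covered at least `k₂ n₁` times.
This is an `n₁ n₂ / min (k₁ n₂, k₂ n₁) = max (n₁/k₁, n₂/k₂)` cover.
-/

open Finset

theorem card_filter_fst_eq_mul {α β : Type*} [Fintype α] [Fintype β] (P : α → Prop)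
    [DecidablePred P] :
    #{p : α × β | P p.1} = #{a | P a} * Fintype.card β := by
  rw [← univ_product_univ, filter_product_left, card_product, card_univ]

theorem card_filter_snd_eq_mul {α β : Type*} [Fintype α] [Fintype β] (P : β → Prop)
    [DecidablePred P] :
    #{p : α × β | P p.2} = Fintype.card α * #{b | P b} := by
  rw [← univ_product_univ, filter_product_right, card_product, card_univ]

section Cuts

variable {V : Type*}

def cutSet (G : SimpleGraph V) (W : Set V) : Set (Sym2 V) :=
  {e | e ∈ G.edgeSet ∧ ∃ a b, e = s(a, b) ∧ a ∈ W ∧ b ∉ W}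

theorem mk_mem_cutSet_iff {G : SimpleGraph V} {W : Set V} {a b : V} :
    s(a, b) ∈ cutSet G W ↔ G.Adj a b ∧ Xor (a ∈ W) (b ∈ W) := by
  simp only [cutSet, Set.mem_ofPred_eq, SimpleGraph.mem_edgeSet, Sym2.eq_iff, xor_def]
  grind

theorem hasCover_iff_exists_sets {G : SimpleGraph V} {n k : ℕ} :
    HasCover G n k ↔
      ∃ W : Fin n → Set V, ∀ a b, G.Adj a b → k ≤ #{i | Xor (a ∈ W i) (b ∈ W i)} := by
  constructor
  · rintro ⟨X, hX, hcov⟩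
    choose W hW using hX
    refine ⟨W, fun a b hab => (hcov s(a, b) hab).trans_eq ?_⟩
    congr 1
    ext i
    simp only [mem_filter, mem_univ, true_and, hW i]
    exact mk_mem_cutSet_iff.trans (and_iff_right hab)
  · rintro ⟨W, hW⟩
    refine ⟨fun i => cutSet G (W i), fun i => ⟨W i, rfl⟩, fun e he => ?_⟩
    induction e with
    | h a b =>
      refine (hW a b he).trans_eq ?_
      congr 1
      ext i
      simp only [mem_filter, mem_univ, true_and]
      exact (mk_mem_cutSet_iff.trans (and_iff_right he)).symm

theorem hasCover_of_sets {G : SimpleGraph V} {ι : Type*} [Fintype ι] {k : ℕ} (W : ι → Set V)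
    (hW : ∀ a b, G.Adj a b → k ≤ #{i | Xor (a ∈ W i) (b ∈ W i)}) :
    HasCover G (Fintype.card ι) k := by
  let e := Fintype.equivFin ι
  refine hasCover_iff_exists_sets.2 ⟨fun i => W (e.symm i), fun a b hab => ?_⟩
  refine (hW a b hab).trans_eq (card_equiv e fun i => ?_)
  simp

theorem hasCover_card_one [Fintype V] (G : SimpleGraph V) : HasCover G (Fintype.card V) 1 := by
  refine hasCover_of_sets (fun v => {v}) fun a b hab => card_pos.2 ⟨a, ?_⟩
  simp [xor_def, hab.ne']

theorem HasCover.le {G : SimpleGraph V} {n k : ℕ} (h : HasCover G n k)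
    (hG : G.edgeSet.Nonempty) : k ≤ n := by
  obtain ⟨⟨a, b⟩, hab⟩ := hG
  obtain ⟨W, hW⟩ := hasCover_iff_exists_sets.1 h
  simpa using (hW a b hab).trans (card_filter_le _ _)

theorem HasCover.comap {V' : Type*} {G : SimpleGraph V} {G' : SimpleGraph V'} {n k : ℕ}
    (h : HasCover G' n k) (f : G →g G') : HasCover G n k := by
  obtain ⟨W, hW⟩ := hasCover_iff_exists_sets.1 h
  exact hasCover_iff_exists_sets.2 ⟨fun i => f ⁻¹' W i, fun a b hab => hW _ _ (f.map_adj hab)⟩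

end Cuts

theorem HasCover.boxProd {V₁ V₂ : Type*} {G₁ : SimpleGraph V₁} {G₂ : SimpleGraph V₂}
    {n₁ k₁ n₂ k₂ : ℕ} (h₁ : HasCover G₁ n₁ k₁) (h₂ : HasCover G₂ n₂ k₂) :
    HasCover (G₁ □ G₂) (n₁ * n₂) (min (k₁ * n₂) (k₂ * n₁)) := by
  obtain ⟨W₁, hW₁⟩ := hasCover_iff_exists_sets.1 h₁
  obtain ⟨W₂, hW₂⟩ := hasCover_iff_exists_sets.1 h₂
  have := hasCover_of_sets (G := G₁ □ G₂) (k := min (k₁ * n₂) (k₂ * n₁))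
    (fun p : Fin n₁ × Fin n₂ => {v | Xor (v.1 ∈ W₁ p.1) (v.2 ∈ W₂ p.2)}) ?_
  · simpa using this
  rintro ⟨a₁, a₂⟩ ⟨b₁, b₂⟩ (⟨hab, rfl : a₂ = b₂⟩ | ⟨hab, rfl : a₁ = b₁⟩)
  · calc min (k₁ * n₂) (k₂ * n₁) ≤ k₁ * n₂ := min_le_left _ _
      _ ≤ #{i | Xor (a₁ ∈ W₁ i) (b₁ ∈ W₁ i)} * n₂ := Nat.mul_le_mul_right _ (hW₁ _ _ hab)
      _ = #{p : Fin n₁ × Fin n₂ | Xor (a₁ ∈ W₁ p.1) (b₁ ∈ W₁ p.1)} := by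
        rw [card_filter_fst_eq_mul fun i => Xor (a₁ ∈ W₁ i) (b₁ ∈ W₁ i), Fintype.card_fin]
      _ = _ := by
        congr 1
        ext p
        simp only [mem_filter, mem_univ, true_and, Set.mem_ofPred_eq]
        grind
  · calc min (k₁ * n₂) (k₂ * n₁) ≤ n₁ * k₂ := (min_le_right _ _).trans_eq (mul_comm _ _)
      _ ≤ n₁ * #{i | Xor (a₂ ∈ W₂ i) (b₂ ∈ W₂ i)} := Nat.mul_le_mul_left _ (hW₂ _ _ hab)
      _ = #{p : Fin n₁ × Fin n₂ | Xor (a₂ ∈ W₂ p.2) (b₂ ∈ W₂ p.2)} := by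
        rw [card_filter_snd_eq_mul fun i => Xor (a₂ ∈ W₂ i) (b₂ ∈ W₂ i), Fintype.card_fin]
      _ = _ := by
        congr 1
        ext p
        simp only [mem_filter, mem_univ, true_and, Set.mem_ofPred_eq]
        grind

section CutCover

variable {V V' : Type*} {G : SimpleGraph V}

theorem cutCover_le {n k : ℕ} (h : HasCover G n k) (hk : 0 < k) : cutCover G ≤ n / k :=
  csInf_le ⟨0, by rintro _ ⟨n, k, -, rfl, -⟩; positivity⟩ ⟨n, k, hk, rfl, h⟩

theorem nonempty_cover_ratios [Fintype V] (G : SimpleGraph V) :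
    {q : ℝ | ∃ n k : ℕ, 0 < k ∧ q = n / k ∧ HasCover G n k}.Nonempty :=
  ⟨_, _, 1, one_pos, rfl, hasCover_card_one G⟩

theorem le_cutCover [Fintype V] {q : ℝ} (h : ∀ n k : ℕ, 0 < k → HasCover G n k → q ≤ n / k) :
    q ≤ cutCover G :=
  le_csInf (nonempty_cover_ratios G) <| by
    rintro _ ⟨n, k, hk, rfl, hc⟩
    exact h n k hk hc

theorem exists_hasCover_of_cutCover_lt [Fintype V] {r : ℝ} (h : cutCover G < r) :
    ∃ n k : ℕ, 0 < k ∧ HasCover G n k ∧ (n / k : ℝ) < r := by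
  obtain ⟨_, ⟨n, k, hk, rfl, hc⟩, hr⟩ :=
    exists_lt_of_csInf_lt (nonempty_cover_ratios G) h
  exact ⟨n, k, hk, hc, hr⟩

theorem cutCover_le_of_hom [Fintype V'] {G' : SimpleGraph V'} (f : G →g G') :
    cutCover G ≤ cutCover G' :=
  le_cutCover fun _ _ hk h => cutCover_le (h.comap f) hk

end CutCover

theorem natCast_mul_div_min_le_max {n₁ k₁ n₂ k₂ : ℕ} (hn₁ : 0 < n₁) (hn₂ : 0 < n₂) :
    ((n₁ * n₂ : ℕ) : ℝ) / (min (k₁ * n₂) (k₂ * n₁) : ℕ) ≤ max (n₁ / k₁ : ℝ) (n₂ / k₂) := by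
  rcases le_total (k₁ * n₂) (k₂ * n₁) with h | h
  · rw [min_eq_left h]
    refine le_max_of_le_left (le_of_eq ?_)
    push_cast
    exact mul_div_mul_right _ _ (by positivity)
  · rw [min_eq_right h]
    refine le_max_of_le_right (le_of_eq ?_)
    push_cast
    rw [mul_comm (n₁ : ℝ)]
    exact mul_div_mul_right _ _ (by positivity)

theorem cutCover_boxProd_le {V₁ V₂ : Type*} [Fintype V₁] [Fintype V₂]
    {G₁ : SimpleGraph V₁} {G₂ : SimpleGraph V₂}
    (h₁ : G₁.edgeSet.Nonempty) (h₂ : G₂.edgeSet.Nonempty) :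
    cutCover (G₁ □ G₂) ≤ max (cutCover G₁) (cutCover G₂) := by
  refine le_of_forall_gt fun r hr => ?_
  obtain ⟨n₁, k₁, hk₁, hc₁, hr₁⟩ := exists_hasCover_of_cutCover_lt ((le_max_left _ _).trans_lt hr)
  obtain ⟨n₂, k₂, hk₂, hc₂, hr₂⟩ := exists_hasCover_of_cutCover_lt ((le_max_right _ _).trans_lt hr)
  have hn₁ : 0 < n₁ := hk₁.trans_le (hc₁.le h₁)
  have hn₂ : 0 < n₂ := hk₂.trans_le (hc₂.le h₂)
  calc cutCover (G₁ □ G₂) ≤ ((n₁ * n₂ : ℕ) : ℝ) / (min (k₁ * n₂) (k₂ * n₁) : ℕ) :=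
        cutCover_le (hc₁.boxProd hc₂) (lt_min (by positivity) (by positivity))
    _ ≤ max (n₁ / k₁ : ℝ) (n₂ / k₂) := natCast_mul_div_min_le_max hn₁ hn₂
    _ < r := max_lt hr₁ hr₂

/-- `x(G₁ □ G₂) = max {x(G₁), x(G₂)}` for the Cartesian product. -/
theorem cutCover_boxProd {V₁ V₂ : Type*} [Fintype V₁] [Fintype V₂]
    (G₁ : SimpleGraph V₁) (G₂ : SimpleGraph V₂)
    (h₁ : G₁.edgeSet.Nonempty) (h₂ : G₂.edgeSet.Nonempty) :
    cutCover (G₁.boxProd G₂) = max (cutCover G₁) (cutCover G₂) := by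
  refine le_antisymm (cutCover_boxProd_le h₁ h₂) (max_le ?_ ?_)
  · obtain ⟨⟨b, -⟩, -⟩ := h₂
    exact cutCover_le_of_hom (SimpleGraph.boxProdLeft G₁ G₂ b).toHom
  · obtain ⟨⟨a, -⟩, -⟩ := h₁
    exact cutCover_le_of_hom (SimpleGraph.boxProdRight G₁ G₂ a).toHom
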